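/- arXiv:math/0510313 — 2 statements merged into one kernel-verified Lean document; each statement's English description precedes it below -/
import Mathlib

section
/- Let ω and η be smooth 1-forms on a Riemannian manifold (M,g). Then the codifferential of their wedge product satisfies d*(ω∧η) = (d*ω)·η − (d*η)·ω − [ω♯, η♯]♭, where ♯ and ♭ denote the musical isomorphisms and [·,·] is the Lie bracket of vector fields. -/
open scoped BigOperators

noncomputable section

/-- Partial derivative of `f` in the `i`-th coordinate direction. -/
def pd {n : ℕ} (f : (Fin n → ℝ) → ℝ) (i : Fin n) (x : Fin n → ℝ) : ℝ :=
  fderiv ℝ f x (Pi.single i 1)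

/-- Pointwise inverse of a metric (the components `g^{ij}`). -/
def ginv {n : ℕ} (g : (Fin n → ℝ) → Matrix (Fin n) (Fin n) ℝ) (x : Fin n → ℝ) :
    Matrix (Fin n) (Fin n) ℝ := (g x)⁻¹

/-- A smooth Riemannian metric in coordinates on `ℝⁿ`. -/
def IsMetric {n : ℕ} (g : (Fin n → ℝ) → Matrix (Fin n) (Fin n) ℝ) : Prop :=
  (∀ i j, ContDiff ℝ (⊤ : ℕ∞) fun x => g x i j) ∧ ∀ x, (g x).IsSymm ∧ (g x).PosDef

/-- The Riemannian volume density `√(det g)`. -/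
def vdens {n : ℕ} (g : (Fin n → ℝ) → Matrix (Fin n) (Fin n) ℝ) (x : Fin n → ℝ) : ℝ :=
  Real.sqrt (g x).det

/-- The codifferential `d*ω = -(1/√g) ∂_i (√g g^{ij} ω_j)` of a 1-form. -/
def codiff1 {n : ℕ} (g : (Fin n → ℝ) → Matrix (Fin n) (Fin n) ℝ)
    (ω : (Fin n → ℝ) → Fin n → ℝ) (x : Fin n → ℝ) : ℝ :=
  -(1 / vdens g x) * ∑ i, pd (fun y => vdens g y * ∑ j, ginv g y i j * ω y j) i x

/-- Components with raised indices `(ω∧η)^{ik}` of the wedge product of two 1-forms. -/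
def wedgeUp {n : ℕ} (g : (Fin n → ℝ) → Matrix (Fin n) (Fin n) ℝ)
    (ω η : (Fin n → ℝ) → Fin n → ℝ) (i k : Fin n) (x : Fin n → ℝ) : ℝ :=
  ∑ a, ∑ b, ginv g x i a * ginv g x k b * (ω x a * η x b - ω x b * η x a)

/-- The codifferential `(d*Ω)_j = -g_{jk} (1/√g) ∂_i (√g Ω^{ik})` of the 2-form `ω∧η`. -/
def codiff2wedge {n : ℕ} (g : (Fin n → ℝ) → Matrix (Fin n) (Fin n) ℝ)
    (ω η : (Fin n → ℝ) → Fin n → ℝ) (j : Fin n) (x : Fin n → ℝ) : ℝ :=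
  -(1 / vdens g x) *
    ∑ k, g x j k * ∑ i, pd (fun y => vdens g y * wedgeUp g ω η i k y) i x

/-- The musical isomorphism `♯` applied to a 1-form. -/
def sharp {n : ℕ} (g : (Fin n → ℝ) → Matrix (Fin n) (Fin n) ℝ)
    (ω : (Fin n → ℝ) → Fin n → ℝ) (x : Fin n → ℝ) (k : Fin n) : ℝ :=
  ∑ j, ginv g x k j * ω x j

/-- The Lie bracket of vector fields, `[X,Y]^k = X^i ∂_i Y^k - Y^i ∂_i X^k`. -/
def bracket {n : ℕ} (X Y : (Fin n → ℝ) → Fin n → ℝ) (x : Fin n → ℝ) (k : Fin n) : ℝ :=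
  ∑ i, (X x i * pd (fun y => Y y k) i x - Y x i * pd (fun y => X y k) i x)

/-- The musical isomorphism `♭` applied to a vector field: `(X♭)_j = g_{jk} X^k`. -/
def flat {n : ℕ} (g : (Fin n → ℝ) → Matrix (Fin n) (Fin n) ℝ)
    (X : (Fin n → ℝ) → Fin n → ℝ) (j : Fin n) (x : Fin n → ℝ) : ℝ :=
  ∑ k, g x j k * X x k


/-! With `X = ω♯` and `Y = η♯` the raised components of `ω∧η` are `X^i Y^k - X^k Y^i`.
The Leibniz rule splits `∂_i (√g (X^i Y^k - X^k Y^i))` into `∂_i(√g X^i) Y^k - ∂_i(√g Y^i) X^k`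
plus `√g [X,Y]^k`; the first two are `-√g d*ω` and `-√g d*η` times `Y^k`, `X^k`, and lowering
the index with `g` turns `X, Y` back into `ω, η`. -/

section Coordinates

variable {n : ℕ}

lemma pd_mul {f h : (Fin n → ℝ) → ℝ} {x : Fin n → ℝ} (i : Fin n)
    (hf : DifferentiableAt ℝ f x) (hh : DifferentiableAt ℝ h x) :
    pd (fun y => f y * h y) i x = pd f i x * h x + f x * pd h i x := by
  simp only [pd, fderiv_fun_mul hf hh, add_apply, smul_apply, smul_eq_mul]
  ring

lemma pd_sub {f h : (Fin n → ℝ) → ℝ} {x : Fin n → ℝ} (i : Fin n)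
    (hf : DifferentiableAt ℝ f x) (hh : DifferentiableAt ℝ h x) :
    pd (fun y => f y - h y) i x = pd f i x - pd h i x := by
  simp [pd, fderiv_fun_sub hf hh]

lemma sum_pd_mul_wedge {ρ : (Fin n → ℝ) → ℝ} {X Y : (Fin n → ℝ) → Fin n → ℝ}
    {x : Fin n → ℝ} (hρ : DifferentiableAt ℝ ρ x)
    (hX : ∀ i, DifferentiableAt ℝ (fun y => X y i) x)
    (hY : ∀ i, DifferentiableAt ℝ (fun y => Y y i) x) (k : Fin n) :
    ∑ i, pd (fun y => ρ y * (X y i * Y y k - X y k * Y y i)) i x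
      = (∑ i, pd (fun y => ρ y * X y i) i x) * Y x k
        - (∑ i, pd (fun y => ρ y * Y y i) i x) * X x k + ρ x * bracket X Y x k := by
  have hterm : ∀ i, pd (fun y => ρ y * (X y i * Y y k - X y k * Y y i)) i x
      = pd (fun y => ρ y * X y i) i x * Y x k - pd (fun y => ρ y * Y y i) i x * X x k
        + ρ x * (X x i * pd (fun y => Y y k) i x - Y x i * pd (fun y => X y k) i x) := by
    intro i
    have hρX := hρ.fun_mul (hX i)
    have hρY := hρ.fun_mul (hY i)
    have hsplit : (fun y => ρ y * (X y i * Y y k - X y k * Y y i))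
        = fun y => ρ y * X y i * Y y k - ρ y * Y y i * X y k := by
      funext y; ring
    rw [hsplit, pd_sub i (hρX.fun_mul (hY k)) (hρY.fun_mul (hX k)),
      pd_mul i hρX (hY k), pd_mul i hρY (hX k)]
    ring
  rw [Finset.sum_congr rfl fun i _ => hterm i]
  simp only [bracket, mul_sub, Finset.sum_add_distrib, Finset.sum_sub_distrib,
    Finset.sum_mul, Finset.mul_sum]

lemma contDiff_det_of_contDiff_entries {A : (Fin n → ℝ) → Matrix (Fin n) (Fin n) ℝ}
    (hA : ∀ i j, ContDiff ℝ (⊤ : ℕ∞) fun y => A y i j) :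
    ContDiff ℝ (⊤ : ℕ∞) fun y => (A y).det := by
  simp only [Matrix.det_apply']
  exact ContDiff.sum fun σ _ => contDiff_const.mul (contDiff_prod fun i _ => hA (σ i) i)

lemma wedgeUp_eq_sharp_mul_sharp (g : (Fin n → ℝ) → Matrix (Fin n) (Fin n) ℝ)
    (ω η : (Fin n → ℝ) → Fin n → ℝ) (i k : Fin n) (y : Fin n → ℝ) :
    wedgeUp g ω η i k y = sharp g ω y i * sharp g η y k - sharp g ω y k * sharp g η y i := by
  simp only [wedgeUp, sharp, Finset.sum_mul_sum]
  rw [Finset.sum_comm (f := fun b a => ginv g y k b * ω y b * (ginv g y i a * η y a)),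
    ← Finset.sum_sub_distrib]
  refine Finset.sum_congr rfl fun a _ => ?_
  rw [← Finset.sum_sub_distrib]
  exact Finset.sum_congr rfl fun b _ => by ring

lemma flat_sharp {g : (Fin n → ℝ) → Matrix (Fin n) (Fin n) ℝ} {x : Fin n → ℝ}
    (hgx : IsUnit (g x).det) (θ : (Fin n → ℝ) → Fin n → ℝ) (j : Fin n) :
    flat g (sharp g θ) j x = θ x j := by
  have hmul : ∀ l, ∑ k, g x j k * (ginv g x k l * θ x l) = (g x * (g x)⁻¹) j l * θ x l :=
    fun l => by simp only [Matrix.mul_apply, Finset.sum_mul, ginv, mul_assoc]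
  simp only [flat, sharp, Finset.mul_sum]
  rw [Finset.sum_comm, Finset.sum_congr rfl fun l _ => hmul l, Matrix.mul_nonsing_inv _ hgx]
  simp [Matrix.one_apply]

namespace IsMetric

variable {g : (Fin n → ℝ) → Matrix (Fin n) (Fin n) ℝ}

lemma det_pos (hg : IsMetric g) (x : Fin n → ℝ) : 0 < (g x).det :=
  (hg.2 x).2.det_pos

lemma contDiff_det (hg : IsMetric g) : ContDiff ℝ (⊤ : ℕ∞) fun y => (g y).det :=
  contDiff_det_of_contDiff_entries hg.1

lemma contDiff_adjugate (hg : IsMetric g) (i k : Fin n) :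
    ContDiff ℝ (⊤ : ℕ∞) fun y => (g y).adjugate i k := by
  simp only [Matrix.adjugate_apply]
  refine contDiff_det_of_contDiff_entries fun a b => ?_
  by_cases hak : a = k
  · simp only [Matrix.updateRow_apply, if_pos hak]
    exact contDiff_const
  · simp only [Matrix.updateRow_apply, if_neg hak]
    exact hg.1 a b

lemma contDiff_ginv (hg : IsMetric g) (i k : Fin n) :
    ContDiff ℝ (⊤ : ℕ∞) fun y => ginv g y i k := by
  simp only [ginv, Matrix.inv_def, Matrix.smul_apply, smul_eq_mul, Ring.inverse_eq_inv]
  exact (hg.contDiff_det.inv fun y => (hg.det_pos y).ne').mul (hg.contDiff_adjugate i k)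

lemma vdens_pos (hg : IsMetric g) (x : Fin n → ℝ) : 0 < vdens g x :=
  Real.sqrt_pos.2 (hg.det_pos x)

lemma differentiableAt_vdens (hg : IsMetric g) (x : Fin n → ℝ) :
    DifferentiableAt ℝ (vdens g) x :=
  (hg.contDiff_det.differentiable (by simp) x).sqrt (hg.det_pos x).ne'

lemma differentiableAt_sharp (hg : IsMetric g) {θ : (Fin n → ℝ) → Fin n → ℝ}
    (hθ : ∀ j, ContDiff ℝ (⊤ : ℕ∞) fun y => θ y j) (x : Fin n → ℝ) (k : Fin n) :
    DifferentiableAt ℝ (fun y => sharp g θ y k) x :=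
  DifferentiableAt.fun_sum fun l _ =>
    ((hg.contDiff_ginv k l).differentiable (by simp) x).mul ((hθ l).differentiable (by simp) x)

end IsMetric

end Coordinates

/-- For smooth 1-forms `ω, η` on a Riemannian manifold `(M,g)`,
`d*(ω∧η) = (d*ω)·η − (d*η)·ω − [ω♯, η♯]♭`. -/
theorem codiff_wedge_of_one_forms {n : ℕ}
    (g : (Fin n → ℝ) → Matrix (Fin n) (Fin n) ℝ) (hg : IsMetric g)
    (ω η : (Fin n → ℝ) → Fin n → ℝ)
    (hω : ∀ j, ContDiff ℝ (⊤ : ℕ∞) fun x => ω x j)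
    (hη : ∀ j, ContDiff ℝ (⊤ : ℕ∞) fun x => η x j) :
    ∀ (x : Fin n → ℝ) (j : Fin n),
      codiff2wedge g ω η j x =
        codiff1 g ω x * η x j - codiff1 g η x * ω x j
          - flat g (bracket (sharp g ω) (sharp g η)) j x := by
  intro x j
  set X := sharp g ω
  set Y := sharp g η
  have hdiv : ∀ k, ∑ i, pd (fun y => vdens g y * wedgeUp g ω η i k y) i x
      = (∑ i, pd (fun y => vdens g y * X y i) i x) * Y x k
        - (∑ i, pd (fun y => vdens g y * Y y i) i x) * X x k
        + vdens g x * bracket X Y x k := fun k => by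
    simp only [wedgeUp_eq_sharp_mul_sharp]
    exact sum_pd_mul_wedge (hg.differentiableAt_vdens x) (hg.differentiableAt_sharp hω x)
      (hg.differentiableAt_sharp hη x) k
  have hunit : IsUnit (g x).det := (hg.det_pos x).ne'.isUnit
  have hlower : ∀ (c : ℝ) (Z : (Fin n → ℝ) → Fin n → ℝ),
      ∑ k, g x j k * (c * Z x k) = c * flat g Z j x := fun c Z => by
    simp only [flat, Finset.mul_sum]; exact Finset.sum_congr rfl fun k _ => by ring
  simp only [codiff2wedge, hdiv, mul_add, mul_sub, Finset.sum_add_distrib, Finset.sum_sub_distrib]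
  rw [hlower, hlower, hlower, flat_sharp hunit, flat_sharp hunit]
  have hcodiff : ∀ θ, codiff1 g θ x
      = -(1 / vdens g x) * ∑ i, pd (fun y => vdens g y * sharp g θ y i) i x := fun _ => rfl
  rw [hcodiff, hcodiff]
  field_simp [(hg.vdens_pos x).ne']
  ring
end
end

section
/- For the warped product ansatz with λ non-vanishing and λ' ≠ 0, the pair of ODEs 0 = λ²K^N + (ln λ)'' − 2((ln λ)')² − f(ln λ)' + A and 0 = f' + 2(ln λ)'' − 2((ln λ)')² + A is equivalent to: f = (λ'' + Aλ + K^N λ³)/λ' − 3λ'/λ together with the third-order ODE λ'''λ'λ² − λλ''(λ'² + λλ'') + Aλ²(2λ'² − λλ'') + K^N λ⁴(3λ'² − λλ'') − λ'⁴ = 0. -/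
/-!
With `(ln λ)' = λ'/λ` and `(ln λ)'' = (λ''λ - λ'²)/λ²`, the first equation is affine in `f` with
leading coefficient `-λ'/λ ≠ 0`, so it says exactly that `f` is the rational expression
`potentialOfWarping K A λ` in `λ, λ', λ''`. Since `I` is open, this identity can be
differentiated on `I`; substituting the resulting `f'` into the second equation and multiplying
by `(λλ')² ≠ 0` yields precisely the third-order equation.
-/

open Real Set Topology

noncomputable def potentialOfWarping (K A : ℝ) (lam : ℝ → ℝ) (t : ℝ) : ℝ :=
  (deriv (deriv lam) t + A * lam t + K * lam t ^ 3) / deriv lam t - 3 * deriv lam t / lam t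

section
variable {K A : ℝ} {lam : ℝ → ℝ} {t : ℝ}

theorem deriv_deriv_log_comp (hlam : ContDiff ℝ 2 lam) (ht : lam t ≠ 0) :
    deriv (deriv fun s => log (lam s)) t
      = (deriv (deriv lam) t * lam t - deriv lam t ^ 2) / lam t ^ 2 := by
  have hdiff : Differentiable ℝ lam := hlam.differentiable (by norm_num)
  have hdiff' : Differentiable ℝ (deriv lam) :=
    ((contDiff_succ_iff_deriv (n := 1)).mp hlam).2.2.differentiable (by norm_num)
  have hlog : deriv (fun s => log (lam s)) =ᶠ[𝓝 t] fun s => deriv lam s / lam s := by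
    filter_upwards [hlam.continuous.continuousAt.eventually_ne ht] with s hs
    exact deriv.log (hdiff s) hs
  rw [hlog.deriv_eq, show (fun s => deriv lam s / lam s) = deriv lam / lam from rfl,
    ((hdiff' t).hasDerivAt.div (hdiff t).hasDerivAt ht).deriv]
  ring

theorem hasDerivAt_potentialOfWarping (hlam : ContDiff ℝ 3 lam)
    (h0 : lam t ≠ 0) (h1 : deriv lam t ≠ 0) :
    HasDerivAt (potentialOfWarping K A lam)
      (((deriv (deriv (deriv lam)) t + A * deriv lam t + 3 * K * lam t ^ 2 * deriv lam t)
            * deriv lam t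
          - (deriv (deriv lam) t + A * lam t + K * lam t ^ 3) * deriv (deriv lam) t)
          / deriv lam t ^ 2
        - (3 * deriv (deriv lam) t * lam t - 3 * deriv lam t ^ 2) / lam t ^ 2) t := by
  have hd1 := (contDiff_succ_iff_deriv (n := 2)).mp hlam
  have hd2 := (contDiff_succ_iff_deriv (n := 1)).mp hd1.2.2
  have hl : HasDerivAt lam (deriv lam t) t := (hd1.1 t).hasDerivAt
  have hl' : HasDerivAt (deriv lam) (deriv (deriv lam) t) t := (hd2.1 t).hasDerivAt
  have hl'' : HasDerivAt (deriv (deriv lam)) (deriv (deriv (deriv lam)) t) t :=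
    (hd2.2.2.differentiable (by norm_num) t).hasDerivAt
  have hnum : HasDerivAt (fun s => deriv (deriv lam) s + A * lam s + K * lam s ^ 3)
      (deriv (deriv (deriv lam)) t + A * deriv lam t + 3 * K * lam t ^ 2 * deriv lam t) t :=
    ((hl''.add (hl.const_mul A)).add ((hl.pow 3).const_mul K)).congr_deriv (by ring)
  exact ((hnum.div hl' h1).sub ((hl'.const_mul 3).div hl h0)).congr_deriv (by ring)

theorem soliton_first_eq_iff_eq_potentialOfWarping (hlam : ContDiff ℝ 2 lam)
    (h0 : lam t ≠ 0) (h1 : deriv lam t ≠ 0) (v : ℝ) :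
    lam t ^ 2 * K + deriv (deriv fun s => log (lam s)) t
        - 2 * deriv (fun s => log (lam s)) t ^ 2
        - v * deriv (fun s => log (lam s)) t + A = 0
      ↔ v = potentialOfWarping K A lam t := by
  rw [deriv_deriv_log_comp hlam h0, deriv.log (hlam.differentiable (by norm_num) t) h0,
    potentialOfWarping]
  field_simp
  constructor <;> intro h <;> linear_combination -h

theorem soliton_second_eq_iff_third_order_ode {f : ℝ → ℝ} (hlam : ContDiff ℝ 3 lam)
    (h0 : lam t ≠ 0) (h1 : deriv lam t ≠ 0) (hf : f =ᶠ[𝓝 t] potentialOfWarping K A lam) :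
    deriv f t + 2 * deriv (deriv fun s => log (lam s)) t
        - 2 * deriv (fun s => log (lam s)) t ^ 2 + A = 0
      ↔ deriv (deriv (deriv lam)) t * deriv lam t * lam t ^ 2
          - lam t * deriv (deriv lam) t * (deriv lam t ^ 2 + lam t * deriv (deriv lam) t)
          + A * lam t ^ 2 * (2 * deriv lam t ^ 2 - lam t * deriv (deriv lam) t)
          + K * lam t ^ 4 * (3 * deriv lam t ^ 2 - lam t * deriv (deriv lam) t)
          - deriv lam t ^ 4 = 0 := by
  rw [hf.deriv_eq, (hasDerivAt_potentialOfWarping hlam h0 h1).deriv,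
    deriv_deriv_log_comp (hlam.of_le (by norm_num)) h0,
    deriv.log (hlam.differentiable (by norm_num) t) h0]
  field_simp
  constructor <;> intro h <;> linear_combination h

end

theorem warped_product_soliton_odes_equivalence_general
    (K A : ℝ) (lam f : ℝ → ℝ) (I : Set ℝ) (hI : IsOpen I)
    (hlam : ContDiff ℝ (⊤ : ℕ∞) lam)
    (hpos : ∀ t ∈ I, 0 < lam t) (hne : ∀ t ∈ I, deriv lam t ≠ 0) :
    (∀ t ∈ I,
      lam t ^ 2 * K + deriv (deriv (fun s => Real.log (lam s))) t
          - 2 * (deriv (fun s => Real.log (lam s)) t) ^ 2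
          - f t * deriv (fun s => Real.log (lam s)) t + A = 0 ∧
      deriv f t + 2 * deriv (deriv (fun s => Real.log (lam s))) t
          - 2 * (deriv (fun s => Real.log (lam s)) t) ^ 2 + A = 0)
    ↔
    (∀ t ∈ I,
      f t = (deriv (deriv lam) t + A * lam t + K * lam t ^ 3) / deriv lam t
          - 3 * deriv lam t / lam t ∧
      deriv (deriv (deriv lam)) t * deriv lam t * lam t ^ 2
          - lam t * deriv (deriv lam) t *
              ((deriv lam t) ^ 2 + lam t * deriv (deriv lam) t)
          + A * lam t ^ 2 * (2 * (deriv lam t) ^ 2 - lam t * deriv (deriv lam) t)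
          + K * lam t ^ 4 * (3 * (deriv lam t) ^ 2 - lam t * deriv (deriv lam) t)
          - (deriv lam t) ^ 4 = 0) := by
  have hlam3 : ContDiff ℝ 3 lam := hlam.of_le (WithTop.coe_le_coe.mpr le_top)
  have hfirst := fun t ht =>
    soliton_first_eq_iff_eq_potentialOfWarping (K := K) (A := A) (hlam3.of_le (by norm_num))
      (hpos t ht).ne' (hne t ht) (f t)
  have hsecond := fun (hfP : EqOn f (potentialOfWarping K A lam) I) t ht =>
    soliton_second_eq_iff_third_order_ode hlam3 (hpos t ht).ne' (hne t ht)
      (hfP.eventuallyEq_of_mem (hI.mem_nhds ht))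
  constructor
  · intro H
    have hfP : EqOn f (potentialOfWarping K A lam) I := fun t ht => (hfirst t ht).1 (H t ht).1
    exact fun t ht => ⟨hfP ht, (hsecond hfP t ht).1 (H t ht).2⟩
  · intro H
    have hfP : EqOn f (potentialOfWarping K A lam) I := fun t ht => (H t ht).1
    exact fun t ht => ⟨(hfirst t ht).2 (hfP ht), (hsecond hfP t ht).2 (H t ht).2⟩

/-- For the warped product ansatz with `λ > 0` and `λ' ≠ 0` on an open
interval, the pair of ODEs
`0 = λ²K^N + (ln λ)'' − 2((ln λ)')² − f(ln λ)' + A` and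
`0 = f' + 2(ln λ)'' − 2((ln λ)')² + A`
is equivalent to `f = (λ'' + Aλ + K^N λ³)/λ' − 3λ'/λ` together with the third-order ODE
`λ'''λ'λ² − λλ''(λ'² + λλ'') + Aλ²(2λ'² − λλ'') + K^Nλ⁴(3λ'² − λλ'') − λ'⁴ = 0`. -/
theorem warped_product_soliton_odes_equivalence
    (K A : ℝ) (lam f : ℝ → ℝ) (I : Set ℝ) (hI : IsOpen I) (hI' : I.OrdConnected)
    (hlam : ContDiff ℝ (⊤ : ℕ∞) lam) (hf : ContDiff ℝ (⊤ : ℕ∞) f)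
    (hpos : ∀ t ∈ I, 0 < lam t) (hne : ∀ t ∈ I, deriv lam t ≠ 0) :
    (∀ t ∈ I,
      lam t ^ 2 * K + deriv (deriv (fun s => Real.log (lam s))) t
          - 2 * (deriv (fun s => Real.log (lam s)) t) ^ 2
          - f t * deriv (fun s => Real.log (lam s)) t + A = 0 ∧
      deriv f t + 2 * deriv (deriv (fun s => Real.log (lam s))) t
          - 2 * (deriv (fun s => Real.log (lam s)) t) ^ 2 + A = 0)
    ↔
    (∀ t ∈ I,
      f t = (deriv (deriv lam) t + A * lam t + K * lam t ^ 3) / deriv lam t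
          - 3 * deriv lam t / lam t ∧
      deriv (deriv (deriv lam)) t * deriv lam t * lam t ^ 2
          - lam t * deriv (deriv lam) t *
              ((deriv lam t) ^ 2 + lam t * deriv (deriv lam) t)
          + A * lam t ^ 2 * (2 * (deriv lam t) ^ 2 - lam t * deriv (deriv lam) t)
          + K * lam t ^ 4 * (3 * (deriv lam t) ^ 2 - lam t * deriv (deriv lam) t)
          - (deriv lam t) ^ 4 = 0) :=
  warped_product_soliton_odes_equivalence_general K A lam f I hI hlam hpos hne
end
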